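/- arXiv:0809.0434 — 11 statements merged into one kernel-verified Lean document; each statement's English description precedes it below -/
import Mathlib

section
/- Let s, t be real numbers with s > 0, t > 0 and s² + t² < 1, and set A = √(1 − s² − t²). Then the point p₁ = (1 − 1/√2) + i(1 − 1/√2) lies strictly inside the circle Γ_{st}, i.e. |p₁ − (s + it)/A| < 1/A. -/
/-- For `s, t > 0` with `s² + t² < 1` and `A = √(1 − s² − t²)`, the point
`p₁ = (1 − 1/√2) + i(1 − 1/√2)` lies strictly inside the circle `Γ_{st}` with
center `(s + it)/A` and radius `1/A`. -/
theorem p1_strictly_inside_Gamma_st (s t : ℝ) (hs : 0 < s) (ht : 0 < t)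
    (hst : s ^ 2 + t ^ 2 < 1) :
    ‖(((1 - 1 / Real.sqrt 2 : ℝ) : ℂ) + ((1 - 1 / Real.sqrt 2 : ℝ) : ℂ) * Complex.I) -
        ((s : ℂ) + (t : ℂ) * Complex.I) / ((Real.sqrt (1 - s ^ 2 - t ^ 2) : ℝ) : ℂ)‖ <
      1 / Real.sqrt (1 - s ^ 2 - t ^ 2) := by
  set A : ℝ := Real.sqrt (1 - s ^ 2 - t ^ 2) with hAdef
  have hpos : 0 < 1 - s ^ 2 - t ^ 2 := by linarith
  have hA : 0 < A := Real.sqrt_pos.mpr hpos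
  have hA2 : A ^ 2 = 1 - s ^ 2 - t ^ 2 := Real.sq_sqrt hpos.le
  have hAne : (A : ℂ) ≠ 0 := by exact_mod_cast hA.ne'
  set a : ℝ := 1 - 1 / Real.sqrt 2 with hadef
  clear_value A a
  have hz : (((a : ℝ) : ℂ) + ((a : ℝ) : ℂ) * Complex.I) -
      ((s : ℂ) + (t : ℂ) * Complex.I) / ((A : ℝ) : ℂ) =
      (((a - s / A : ℝ) : ℂ) + ((a - t / A : ℝ) : ℂ) * Complex.I) := by
    push_cast
    field_simp
    ring
  rw [hz, Complex.norm_add_mul_I]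
  have h2 : Real.sqrt 2 ^ 2 = 2 := Real.sq_sqrt (by norm_num)
  have h2' : 1 < Real.sqrt 2 := by
    nlinarith [Real.sqrt_nonneg 2]
  have ha : 0 < a := by
    rw [hadef]
    have : 1 / Real.sqrt 2 < 1 := by
      rw [div_lt_one (by linarith)]; exact h2'
    linarith
  rw [show (1 : ℝ) / A = Real.sqrt ((1 / A) ^ 2) by
    rw [Real.sqrt_sq (by positivity)]]
  apply Real.sqrt_lt_sqrt (by positivity)
  have key : (a * A - s) ^ 2 + (a * A - t) ^ 2 < 1 := by
    have ha2 : 2 * a ^ 2 < 1 := by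
      have : a ^ 2 = 3 / 2 - Real.sqrt 2 := by
        rw [hadef]; field_simp; nlinarith
      linarith [this, h2']
    nlinarith [mul_pos hA (add_pos hs ht), mul_pos ha (mul_pos hA (add_pos hs ht)),
      sq_nonneg A, mul_pos hA hA]
  have expand : ((a - s / A) ^ 2 + (a - t / A) ^ 2) * A ^ 2 =
      (a * A - s) ^ 2 + (a * A - t) ^ 2 := by
    field_simp
  have hfin : ((a - s / A) ^ 2 + (a - t / A) ^ 2) * A ^ 2 < 1 := expand ▸ key
  calc (a - s / A) ^ 2 + (a - t / A) ^ 2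
      = (((a - s / A) ^ 2 + (a - t / A) ^ 2) * A ^ 2) / A ^ 2 := by
        field_simp
    _ < 1 / A ^ 2 := by
        gcongr
    _ = (1 / A) ^ 2 := by ring
end

section
/- Let s, t be real numbers with s > 0, t > 0 and s² + t² < 1, and set A = √(1 − s² − t²). Then the point p₂ = (1 + 1/√2) + i(1 + 1/√2) lies strictly outside the circle Γ_{st} (i.e. |p₂ − (s + it)/A| > 1/A) if and only if 3s² + 3t² + 2st < 2. -/
/-- For `s, t > 0` with `s² + t² < 1` and `A = √(1 − s² − t²)`, the point
`p₂ = (1 + 1/√2) + i(1 + 1/√2)` lies strictly outside the circle `Γ_{st}` with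
center `(s + it)/A` and radius `1/A` iff `3s² + 3t² + 2st < 2`. -/
theorem p2_strictly_outside_Gamma_st_iff (s t : ℝ) (hs : 0 < s) (ht : 0 < t)
    (hst : s ^ 2 + t ^ 2 < 1) :
    ‖((((1 + 1 / Real.sqrt 2 : ℝ) : ℂ) + ((1 + 1 / Real.sqrt 2 : ℝ) : ℂ) * Complex.I) -
        ((s : ℂ) + (t : ℂ) * Complex.I) / ((Real.sqrt (1 - s ^ 2 - t ^ 2) : ℝ) : ℂ))‖ >
      1 / Real.sqrt (1 - s ^ 2 - t ^ 2) ↔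
    3 * s ^ 2 + 3 * t ^ 2 + 2 * s * t < 2 := by
  set u : ℝ := Real.sqrt (1 - s ^ 2 - t ^ 2) with hu_def
  have hpos : (0:ℝ) < 1 - s ^ 2 - t ^ 2 := by linarith
  have hu0 : 0 < u := Real.sqrt_pos.mpr hpos
  have hu2 : u ^ 2 = 1 - s ^ 2 - t ^ 2 := Real.sq_sqrt hpos.le
  have hr0 : 0 < Real.sqrt 2 := Real.sqrt_pos.mpr (by norm_num)
  have hr2 : Real.sqrt 2 ^ 2 = 2 := Real.sq_sqrt (by norm_num)
  set c : ℝ := 1 + 1 / Real.sqrt 2 with hc_def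
  have hc0 : 0 < c := by positivity
  have e1 : 4 * c ^ 2 = 6 + 4 * Real.sqrt 2 := by
    rw [hc_def]; field_simp; ring_nf; linear_combination (-(2 + 4 * Real.sqrt 2)) * hr2
  have e2 : (2 * c ^ 2 - 1) ^ 2 = 12 + 8 * Real.sqrt 2 := by
    linear_combination ((2 * c ^ 2 + 1 + 2 * Real.sqrt 2) / 2) * e1 + 4 * hr2
  have hc21 : 0 < 2 * c ^ 2 - 1 := by linarith
  have hexpr : (((c : ℝ) : ℂ) + ((c : ℝ) : ℂ) * Complex.I) -
        ((s : ℂ) + (t : ℂ) * Complex.I) / ((u : ℝ) : ℂ) =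
      ((c - s / u : ℝ) : ℂ) + ((c - t / u : ℝ) : ℂ) * Complex.I := by
    have : ((u : ℝ) : ℂ) ≠ 0 := by exact_mod_cast hu0.ne'
    push_cast
    field_simp
    ring
  rw [hexpr, Complex.norm_add_mul_I, gt_iff_lt,
    Real.lt_sqrt (by positivity : (0:ℝ) ≤ 1 / u)]
  have key : ((1 / u) ^ 2 < (c - s / u) ^ 2 + (c - t / u) ^ 2) ↔
      (1 < (c * u - s) ^ 2 + (c * u - t) ^ 2) := by
    have hE : ((c - s / u) ^ 2 + (c - t / u) ^ 2) * u ^ 2 =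
        (c * u - s) ^ 2 + (c * u - t) ^ 2 := by
      field_simp
    rw [div_pow, one_pow, div_lt_iff₀ (by positivity : (0:ℝ) < u ^ 2), hE]
  rw [key]
  -- (cu-s)^2 + (cu-t)^2 - 1 = u * (u*(2c^2-1) - 2c(s+t))
  have hfac : (c * u - s) ^ 2 + (c * u - t) ^ 2 - 1 =
      u * (u * (2 * c ^ 2 - 1) - 2 * c * (s + t)) := by
    linear_combination hu2
  have expand1 : (2 * c * (s + t)) ^ 2 = (6 + 4 * Real.sqrt 2) * (s + t) ^ 2 := by
    linear_combination (s + t) ^ 2 * e1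
  have expand2 : (u * (2 * c ^ 2 - 1)) ^ 2 =
      (1 - s ^ 2 - t ^ 2) * (12 + 8 * Real.sqrt 2) := by
    linear_combination (2 * c ^ 2 - 1) ^ 2 * hu2 + (1 - s ^ 2 - t ^ 2) * e2
  constructor
  · intro h
    have h1 : 0 < u * (u * (2 * c ^ 2 - 1) - 2 * c * (s + t)) := by linarith [hfac]
    have h2 : 0 < u * (2 * c ^ 2 - 1) - 2 * c * (s + t) := by
      by_contra hcon
      push_neg at hcon
      exact absurd h1 (not_lt.mpr (mul_nonpos_of_nonneg_of_nonpos hu0.le hcon))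
    have h3 : (2 * c * (s + t)) ^ 2 < (u * (2 * c ^ 2 - 1)) ^ 2 := by
      exact pow_lt_pow_left₀ (by linarith) (by positivity) (two_ne_zero)
    rw [expand1, expand2] at h3
    have hiden : (1 - s ^ 2 - t ^ 2) * (12 + 8 * Real.sqrt 2) -
        (6 + 4 * Real.sqrt 2) * (s + t) ^ 2 =
        (6 + 4 * Real.sqrt 2) * (2 - (3 * s ^ 2 + 3 * t ^ 2 + 2 * s * t)) := by ring
    by_contra hcon
    push_neg at hcon
    have : (6 + 4 * Real.sqrt 2) * (2 - (3 * s ^ 2 + 3 * t ^ 2 + 2 * s * t)) ≤ 0 :=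
      mul_nonpos_of_nonneg_of_nonpos (by positivity) (by linarith)
    linarith
  · intro h
    have h3 : (2 * c * (s + t)) ^ 2 < (u * (2 * c ^ 2 - 1)) ^ 2 := by
      rw [expand1, expand2]
      have hiden : (1 - s ^ 2 - t ^ 2) * (12 + 8 * Real.sqrt 2) -
          (6 + 4 * Real.sqrt 2) * (s + t) ^ 2 =
          (6 + 4 * Real.sqrt 2) * (2 - (3 * s ^ 2 + 3 * t ^ 2 + 2 * s * t)) := by ring
      have hq : 0 < (6 + 4 * Real.sqrt 2) * (2 - (3 * s ^ 2 + 3 * t ^ 2 + 2 * s * t)) :=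
        mul_pos (by positivity) (by linarith)
      linarith
    have h2 : 2 * c * (s + t) < u * (2 * c ^ 2 - 1) :=
      lt_of_pow_lt_pow_left₀ 2 (by positivity) h3
    linarith [hfac, mul_pos hu0
      (by linarith : (0:ℝ) < u * (2 * c ^ 2 - 1) - 2 * c * (s + t))]
end

section
/- Let s, t be real numbers with s > 0, t > 0 and s² + t² < 1, and set A = √(1 − s² − t²). Then the point x₀ = 2 + √3 lies on or strictly outside the circle Γ_{st} (i.e. |x₀ − (s + it)/A| ≥ 1/A) if and only if 4s² + 3t² ≤ 3. -/
/-- For `s, t > 0` with `s² + t² < 1` and `A = √(1 − s² − t²)`, the point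
`x₀ = 2 + √3` lies on or strictly outside the circle `Γ_{st}` with
center `(s + it)/A` and radius `1/A` iff `4s² + 3t² ≤ 3`. -/
theorem x0_on_or_outside_Gamma_st_iff (s t : ℝ) (hs : 0 < s) (ht : 0 < t)
    (hst : s ^ 2 + t ^ 2 < 1) :
    ‖(((2 + Real.sqrt 3 : ℝ) : ℂ) -
        ((s : ℂ) + (t : ℂ) * Complex.I) / ((Real.sqrt (1 - s ^ 2 - t ^ 2) : ℝ) : ℂ))‖ ≥
      1 / Real.sqrt (1 - s ^ 2 - t ^ 2) ↔
    4 * s ^ 2 + 3 * t ^ 2 ≤ 3 := by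
  set A := Real.sqrt (1 - s ^ 2 - t ^ 2) with hAdef
  have hApos : 0 < A := Real.sqrt_pos.mpr (by linarith)
  have hA2 : A ^ 2 = 1 - s ^ 2 - t ^ 2 := Real.sq_sqrt (by linarith)
  have hAne : (A : ℂ) ≠ 0 := by exact_mod_cast hApos.ne'
  set r := Real.sqrt 3 with hrdef
  have hr2 : r ^ 2 = 3 := Real.sq_sqrt (by norm_num)
  have hr0 : 0 < r := Real.sqrt_pos.mpr (by norm_num)
  set c : ℝ := 2 + r with hcdef
  have hc0 : 0 < c := by linarith
  have hz : (((2 + r : ℝ) : ℂ) - ((s : ℂ) + (t : ℂ) * Complex.I) / ((A : ℝ) : ℂ))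
      = (((c - s / A : ℝ)) : ℂ) + ((-(t / A) : ℝ) : ℂ) * Complex.I := by
    push_cast
    field_simp
    rw [Complex.ofReal_add]
    push_cast
    ring
  rw [hz, Complex.norm_add_mul_I]
  rw [ge_iff_le, Real.le_sqrt' (by positivity)]
  have key : (c - s / A) ^ 2 + (-(t / A)) ^ 2 - (1 / A) ^ 2
      = 2 * c * (r * A - s) / A := by
    have key0 : (c * A - s) ^ 2 + t ^ 2 - 1 = 2 * c * A * (r * A - s) := by
      linear_combination hA2 - A ^ 2 * hr2
    field_simp
    linear_combination key0
  constructor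
  · intro h
    have h1 : 0 ≤ 2 * c * (r * A - s) / A := by linarith [key]
    have h2 : 0 ≤ r * A - s := by
      by_contra h3
      push_neg at h3
      have : 2 * c * (r * A - s) / A < 0 := by
        apply div_neg_of_neg_of_pos _ hApos
        nlinarith
      linarith
    nlinarith [mul_nonneg h2 (by positivity : (0:ℝ) ≤ r * A + s)]
  · intro h
    have h2 : 0 ≤ r * A - s := by
      nlinarith [mul_pos hr0 hApos]
    have h1 : 0 ≤ 2 * c * (r * A - s) / A := by positivity
    linarith [key]
end

section
/- Let s, t be real numbers with s > 0, t > 0 and s² + t² < 1, and set A = √(1 − s² − t²). Then the point y₀ = i(2 + √3) lies on or strictly outside the circle Γ_{st} (i.e. |y₀ − (s + it)/A| ≥ 1/A) if and only if 3s² + 4t² ≤ 3. -/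
/-- For `s, t > 0` with `s² + t² < 1` and `A = √(1 − s² − t²)`, the point
`y₀ = i(2 + √3)` lies on or strictly outside the circle `Γ_{st}` with
center `(s + it)/A` and radius `1/A` iff `3s² + 4t² ≤ 3`. -/
theorem y0_on_or_outside_Gamma_st_iff (s t : ℝ) (hs : 0 < s) (ht : 0 < t)
    (hst : s ^ 2 + t ^ 2 < 1) :
    ‖((2 + Real.sqrt 3 : ℝ) : ℂ) * Complex.I -
        ((s : ℂ) + (t : ℂ) * Complex.I) / ((Real.sqrt (1 - s ^ 2 - t ^ 2) : ℝ) : ℂ)‖ ≥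
      1 / Real.sqrt (1 - s ^ 2 - t ^ 2) ↔
    3 * s ^ 2 + 4 * t ^ 2 ≤ 3 := by
  set A := Real.sqrt (1 - s ^ 2 - t ^ 2) with hAdef
  have hu : 0 < 1 - s ^ 2 - t ^ 2 := by linarith
  have hA : 0 < A := Real.sqrt_pos.2 hu
  have hA2 : A ^ 2 = 1 - s ^ 2 - t ^ 2 := Real.sq_sqrt hu.le
  have hr : (0:ℝ) < Real.sqrt 3 := Real.sqrt_pos.2 (by norm_num)
  have h3 : Real.sqrt 3 ^ 2 = 3 := Real.sq_sqrt (by norm_num)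
  set r := Real.sqrt 3 with hrdef
  -- rewrite the complex number as x + y*I
  have hz : (((2 + r : ℝ) : ℂ) * Complex.I -
        ((s : ℂ) + (t : ℂ) * Complex.I) / ((A : ℝ) : ℂ))
      = ((-s/A : ℝ) : ℂ) + ((2 + r - t/A : ℝ) : ℂ) * Complex.I := by
    have hAne : ((A:ℝ):ℂ) ≠ 0 := Complex.ofReal_ne_zero.2 hA.ne'
    push_cast
    field_simp
    ring
  rw [hz, Complex.norm_add_mul_I]
  have hX : (0:ℝ) ≤ (-s/A)^2 + (2 + r - t/A)^2 := by positivity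
  have hkey : 1 / A ≤ Real.sqrt ((-s/A)^2 + (2 + r - t/A)^2) ↔
      (1/A)^2 ≤ (-s/A)^2 + (2 + r - t/A)^2 := by
    constructor
    · intro h
      calc (1/A)^2 ≤ Real.sqrt ((-s/A)^2 + (2 + r - t/A)^2) ^ 2 :=
            pow_le_pow_left₀ (by positivity) h 2
        _ = _ := Real.sq_sqrt hX
    · intro h
      have h' := Real.sqrt_le_sqrt h
      rwa [Real.sqrt_sq (by positivity : (0:ℝ) ≤ 1/A)] at h'
  rw [ge_iff_le, hkey]
  -- clear denominators: condition is 1 ≤ s² + ((2+r)A − t)²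
  have hmul : (-s/A)^2 + (2 + r - t/A)^2 = (s^2 + ((2 + r) * A - t)^2) / A^2 := by
    field_simp
  have hone : ((1:ℝ)/A)^2 = 1 / A^2 := by rw [div_pow, one_pow]
  have hstep : (1/A)^2 ≤ (-s/A)^2 + (2 + r - t/A)^2 ↔
      1 ≤ s^2 + ((2 + r) * A - t)^2 := by
    rw [hmul, hone, div_le_div_iff_of_pos_right (by positivity : (0:ℝ) < A^2)]
  rw [hstep]
  -- key algebraic identity
  have hid : s^2 + ((2 + r) * A - t)^2 - 1 = 2 * (2 + r) * A * (r * A - t) := by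
    linear_combination hA2 - A^2 * h3
  have hrA2 : (r * A)^2 = 3 * (1 - s^2 - t^2) := by rw [mul_pow, h3, hA2]
  constructor
  · intro h
    have h1 : 0 ≤ 2 * (2 + r) * A * (r * A - t) := by linarith
    have h2 : 0 ≤ r * A - t := by
      by_contra hc
      push_neg at hc
      have := mul_pos (by positivity : (0:ℝ) < 2 * (2 + r) * A)
        (by linarith : (0:ℝ) < t - r * A)
      nlinarith
    have h3' : t ^ 2 ≤ (r * A) ^ 2 := by nlinarith
    linarith [hrA2 ▸ h3']
  · intro h
    have ht2 : t ^ 2 ≤ (r * A) ^ 2 := by rw [hrA2]; linarith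
    have h2 : t ≤ r * A := by nlinarith [mul_pos hr hA]
    have h1 : 0 ≤ 2 * (2 + r) * A * (r * A - t) :=
      mul_nonneg (by positivity) (by linarith)
    linarith
end

section
/- Let s, t be real numbers with s > 0, t > 0 and s² + t² < 1, and set A = √(1 − s² − t²). Then the following are equivalent: (i) p₂ = (1 + 1/√2) + i(1 + 1/√2) lies strictly inside Γ_{st}, x₀ = 2 + √3 lies on or strictly outside Γ_{st}, and y₀ = i(2 + √3) lies strictly inside Γ_{st}; (ii) 3s² + 4t² > 3 and 4s² + 3t² ≤ 3. -/
set_option maxHeartbeats 1000000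


/-- For `s, t > 0` with `s² + t² < 1` and `A = √(1 − s² − t²)`: the point
`p₂ = (1 + 1/√2) + i(1 + 1/√2)` lies strictly inside the circle `Γ_{st}` (center
`(s + it)/A`, radius `1/A`), `x₀ = 2 + √3` lies on or strictly outside `Γ_{st}`, and
`y₀ = i(2 + √3)` lies strictly inside `Γ_{st}`, iff `3s² + 4t² > 3` and `4s² + 3t² ≤ 3`. -/
theorem C2_plus_characterization (s t : ℝ) (hs : 0 < s) (ht : 0 < t)
    (hst : s ^ 2 + t ^ 2 < 1) :
    (‖((((1 + 1 / Real.sqrt 2 : ℝ) : ℂ) + ((1 + 1 / Real.sqrt 2 : ℝ) : ℂ) * Complex.I) -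
          ((s : ℂ) + (t : ℂ) * Complex.I) / ((Real.sqrt (1 - s ^ 2 - t ^ 2) : ℝ) : ℂ))‖ <
        1 / Real.sqrt (1 - s ^ 2 - t ^ 2) ∧
      ‖(((2 + Real.sqrt 3 : ℝ) : ℂ) -
          ((s : ℂ) + (t : ℂ) * Complex.I) / ((Real.sqrt (1 - s ^ 2 - t ^ 2) : ℝ) : ℂ))‖ ≥
        1 / Real.sqrt (1 - s ^ 2 - t ^ 2) ∧
      ‖(((2 + Real.sqrt 3 : ℝ) : ℂ) * Complex.I -
          ((s : ℂ) + (t : ℂ) * Complex.I) / ((Real.sqrt (1 - s ^ 2 - t ^ 2) : ℝ) : ℂ))‖ <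
        1 / Real.sqrt (1 - s ^ 2 - t ^ 2)) ↔
    (3 * s ^ 2 + 4 * t ^ 2 > 3 ∧ 4 * s ^ 2 + 3 * t ^ 2 ≤ 3) := by
  have h1 : (0:ℝ) < 1 - s ^ 2 - t ^ 2 := by linarith
  set A := Real.sqrt (1 - s ^ 2 - t ^ 2) with hAdef
  have hA : 0 < A := Real.sqrt_pos.mpr h1
  have hA2 : A ^ 2 = 1 - s ^ 2 - t ^ 2 := Real.sq_sqrt h1.le
  have hAne : ((A:ℝ):ℂ) ≠ 0 := by exact_mod_cast hA.ne'
  set r2 := Real.sqrt 2 with hr2def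
  set r3 := Real.sqrt 3 with hr3def
  have hr2 : r2 ^ 2 = 2 := Real.sq_sqrt (by norm_num)
  have hr3 : r3 ^ 2 = 3 := Real.sq_sqrt (by norm_num)
  have hr2pos : 0 < r2 := Real.sqrt_pos.mpr (by norm_num)
  have hr3pos : 0 < r3 := Real.sqrt_pos.mpr (by norm_num)
  have key : ∀ (z : ℂ) (x y : ℝ), z = (x:ℂ) + (y:ℂ) * Complex.I →
      ‖(z - ((s:ℂ) + (t:ℂ) * Complex.I) / ((A:ℝ):ℂ))‖ =
        Real.sqrt ((x * A - s) ^ 2 + (y * A - t) ^ 2) / A := by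
    intro z x y hz
    have e : z - ((s:ℂ) + (t:ℂ) * Complex.I) / ((A:ℝ):ℂ) =
        (((x * A - s : ℝ):ℂ) + ((y * A - t : ℝ):ℂ) * Complex.I) / ((A:ℝ):ℂ) := by
      rw [hz]; field_simp; push_cast; ring
    rw [e, norm_div, Complex.norm_real, Real.norm_eq_abs, abs_of_pos hA, Complex.norm_add_mul_I]
  have k1 := key _ (1 + 1 / r2) (1 + 1 / r2) rfl
  have k2 := key (((2 + r3 : ℝ):ℂ)) (2 + r3) 0 (by simp)
  have k3 := key (((2 + r3 : ℝ):ℂ) * Complex.I) 0 (2 + r3) (by simp)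
  rw [k1, k2, k3, ge_iff_le, div_lt_div_iff_of_pos_right hA,
    div_le_div_iff_of_pos_right hA, div_lt_div_iff_of_pos_right hA,
    Real.sqrt_lt' one_pos, Real.sqrt_lt' one_pos, Real.one_le_sqrt]
  have h12 : 1 / r2 = r2 / 2 := by
    rw [div_eq_div_iff hr2pos.ne' (by norm_num : (2:ℝ) ≠ 0)]; nlinarith [hr2]
  have iff3 : (0 * A - s) ^ 2 + ((2 + r3) * A - t) ^ 2 < 1 ^ 2 ↔ r3 * A < t := by
    constructor
    · intro h
      by_contra h'
      push_neg at h'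
      nlinarith [mul_nonneg hA.le (sub_nonneg.mpr h'), sq_nonneg (r3 * A - t),
        mul_self_le_mul_self ht.le h']
    · intro h
      nlinarith [mul_pos (mul_pos (show (0:ℝ) < 2 + r3 by linarith) hA) (sub_pos.mpr h)]
  have iff2 : 1 ≤ ((2 + r3) * A - s) ^ 2 + (0 * A - t) ^ 2 ↔ s ≤ r3 * A := by
    constructor
    · intro h
      by_contra h'
      push_neg at h'
      nlinarith [mul_pos (mul_pos (show (0:ℝ) < 2 + r3 by linarith) hA) (sub_pos.mpr h'),
        hr3, hA2]
    · intro h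
      nlinarith [mul_nonneg hA.le (sub_nonneg.mpr h), sq_nonneg (r3 * A - s),
        mul_self_le_mul_self hs.le h, hr3, hA2]
  have himp1 : r3 * A < t →
      ((1 + 1 / r2) * A - s) ^ 2 + ((1 + 1 / r2) * A - t) ^ 2 < 1 ^ 2 := by
    intro h
    have hle : r2 ≤ r3 := Real.sqrt_le_sqrt (by norm_num)
    have h' : r2 * A < s + t := by
      have : r2 * A ≤ r3 * A := by nlinarith
      linarith
    rw [h12]
    nlinarith [mul_pos (mul_pos (show (0:ℝ) < 2 + r2 by linarith) hA) (sub_pos.mpr h')]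
  have sq3 : r3 * A < t ↔ 3 * s ^ 2 + 4 * t ^ 2 > 3 := by
    constructor
    · intro h
      nlinarith [mul_self_lt_mul_self (mul_nonneg hr3pos.le hA.le) h]
    · intro h
      by_contra h'
      push_neg at h'
      nlinarith [mul_self_le_mul_self ht.le h']
  have sq2 : s ≤ r3 * A ↔ 4 * s ^ 2 + 3 * t ^ 2 ≤ 3 := by
    constructor
    · intro h
      nlinarith [mul_self_le_mul_self hs.le h]
    · intro h
      by_contra h'
      push_neg at h'
      nlinarith [mul_self_lt_mul_self (mul_nonneg hr3pos.le hA.le) h']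
  constructor
  · rintro ⟨_, hc2, hc3⟩
    exact ⟨sq3.mp (iff3.mp hc3), sq2.mp (iff2.mp hc2)⟩
  · rintro ⟨h3, h2⟩
    exact ⟨himp1 (sq3.mpr h3), iff2.mpr (sq2.mpr h2), iff3.mpr (sq3.mpr h3)⟩
end

section
/- Let s, t be real numbers with s > 0, t > 0 and s² + t² < 1, and set A = √(1 − s² − t²). Then the following are equivalent: (i) p₂ = (1 + 1/√2) + i(1 + 1/√2) lies strictly inside Γ_{st}, y₀ = i(2 + √3) lies on or strictly outside Γ_{st}, and x₀ = 2 + √3 lies strictly inside Γ_{st}; (ii) 4s² + 3t² > 3 and 3s² + 4t² ≤ 3. -/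
lemma circ_lt_iff (A x y u v : ℝ) (hA : 0 < A) :
    norm (((x:ℝ):ℂ) + ((y:ℝ):ℂ) * Complex.I -
        ((u:ℂ) + (v:ℂ) * Complex.I) / ((A:ℝ):ℂ)) < 1 / A ↔
    (A * x - u) ^ 2 + (A * y - v) ^ 2 < 1 := by
  have hA0 : (A:ℂ) ≠ 0 := by exact_mod_cast hA.ne'
  have he : ((x:ℝ):ℂ) + ((y:ℝ):ℂ) * Complex.I - ((u:ℂ) + (v:ℂ) * Complex.I) / ((A:ℝ):ℂ)
      = (((x - u/A : ℝ)):ℂ) + (((y - v/A : ℝ)):ℂ) * Complex.I := by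
    push_cast; field_simp; try ring
  rw [he, Complex.norm_add_mul_I]
  rw [show (1:ℝ)/A = Real.sqrt ((1/A)^2) from (Real.sqrt_sq (by positivity)).symm]
  rw [Real.sqrt_lt_sqrt_iff (by positivity)]
  have h2 : (x - u/A)^2 + (y - v/A)^2 = ((A*x - u)^2 + (A*y - v)^2) / A^2 := by
    field_simp; try ring
  have h3 : (1/A)^2 = 1 / A^2 := by rw [one_div, one_div, inv_pow]
  rw [h2, h3, div_lt_div_iff_of_pos_right (by positivity)]

set_option maxHeartbeats 1000000 in
/-- For `s, t > 0` with `s² + t² < 1` and `A = √(1 − s² − t²)`: the point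
`p₂ = (1 + 1/√2) + i(1 + 1/√2)` lies strictly inside the circle `Γ_{st}` (center
`(s + it)/A`, radius `1/A`), `y₀ = i(2 + √3)` lies on or strictly outside `Γ_{st}`, and
`x₀ = 2 + √3` lies strictly inside `Γ_{st}`, iff `4s² + 3t² > 3` and `3s² + 4t² ≤ 3`. -/
theorem C2_minus_characterization (s t : ℝ) (hs : 0 < s) (ht : 0 < t)
    (hst : s ^ 2 + t ^ 2 < 1) :
    (norm ((((1 + 1 / Real.sqrt 2 : ℝ) : ℂ) + ((1 + 1 / Real.sqrt 2 : ℝ) : ℂ) * Complex.I) -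
          ((s : ℂ) + (t : ℂ) * Complex.I) / ((Real.sqrt (1 - s ^ 2 - t ^ 2) : ℝ) : ℂ)) <
        1 / Real.sqrt (1 - s ^ 2 - t ^ 2) ∧
      norm (((2 + Real.sqrt 3 : ℝ) : ℂ) * Complex.I -
          ((s : ℂ) + (t : ℂ) * Complex.I) / ((Real.sqrt (1 - s ^ 2 - t ^ 2) : ℝ) : ℂ)) ≥
        1 / Real.sqrt (1 - s ^ 2 - t ^ 2) ∧
      norm (((2 + Real.sqrt 3 : ℝ) : ℂ) -
          ((s : ℂ) + (t : ℂ) * Complex.I) / ((Real.sqrt (1 - s ^ 2 - t ^ 2) : ℝ) : ℂ)) <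
        1 / Real.sqrt (1 - s ^ 2 - t ^ 2)) ↔
    (4 * s ^ 2 + 3 * t ^ 2 > 3 ∧ 3 * s ^ 2 + 4 * t ^ 2 ≤ 3) := by
  set A := Real.sqrt (1 - s ^ 2 - t ^ 2) with hAdef
  have hpos : (0:ℝ) < 1 - s ^ 2 - t ^ 2 := by linarith
  have hA : 0 < A := Real.sqrt_pos.mpr hpos
  have hA2 : A ^ 2 = 1 - s ^ 2 - t ^ 2 := Real.sq_sqrt hpos.le
  set r2 := Real.sqrt 2 with hr2def
  set r3 := Real.sqrt 3 with hr3def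
  have hr2 : r2 ^ 2 = 2 := Real.sq_sqrt (by norm_num)
  have hr3 : r3 ^ 2 = 3 := Real.sq_sqrt (by norm_num)
  have hr2pos : 0 < r2 := Real.sqrt_pos.mpr (by norm_num)
  have hr3pos : 0 < r3 := Real.sqrt_pos.mpr (by norm_num)
  have hr23 : r2 ≤ r3 := Real.sqrt_le_sqrt (by norm_num)
  -- rewrite the three conditions via circ_lt_iff
  have e1 : ((1 + 1 / r2 : ℝ) : ℂ) + ((1 + 1 / r2 : ℝ) : ℂ) * Complex.I -
        ((s : ℂ) + (t : ℂ) * Complex.I) / ((A : ℝ) : ℂ)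
      = ((1 + 1 / r2 : ℝ) : ℂ) + ((1 + 1 / r2 : ℝ) : ℂ) * Complex.I -
        ((s : ℂ) + (t : ℂ) * Complex.I) / ((A : ℝ) : ℂ) := rfl
  have e2 : ((2 + r3 : ℝ) : ℂ) * Complex.I -
        ((s : ℂ) + (t : ℂ) * Complex.I) / ((A : ℝ) : ℂ)
      = ((0 : ℝ) : ℂ) + ((2 + r3 : ℝ) : ℂ) * Complex.I -
        ((s : ℂ) + (t : ℂ) * Complex.I) / ((A : ℝ) : ℂ) := by push_cast; try ring
  have e3 : ((2 + r3 : ℝ) : ℂ) -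
        ((s : ℂ) + (t : ℂ) * Complex.I) / ((A : ℝ) : ℂ)
      = ((2 + r3 : ℝ) : ℂ) + ((0 : ℝ) : ℂ) * Complex.I -
        ((s : ℂ) + (t : ℂ) * Complex.I) / ((A : ℝ) : ℂ) := by push_cast; try ring
  rw [e2, e3, circ_lt_iff A _ _ s t hA, circ_lt_iff A _ _ s t hA,
    ge_iff_le, ← not_lt, circ_lt_iff A _ _ s t hA, not_lt]
  -- now pure real statement
  have hx1 : (1:ℝ) + 1 / r2 = 1 + r2 / 2 := by
    have : (1:ℝ) / r2 = r2 / 2 := by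
      rw [div_eq_div_iff hr2pos.ne' (by norm_num : (2:ℝ) ≠ 0)]; nlinarith
    rw [this]
  rw [hx1]
  constructor
  · rintro ⟨h1, h2, h3⟩
    -- from h3 : (A*(2+r3) - s)^2 + (A*0 - t)^2 < 1 get 4s²+3t²>3
    have k1 : A * (3 + 2 * r3) < (2 + r3) * s := by
      have hAr : A ^ 2 * r3 ^ 2 = 3 * A ^ 2 := by rw [hr3]; try ring
      nlinarith [h3, hA2, hA, mul_pos hA hA]
    have k2 : r3 * A < s := by
      have hAr : r3 ^ 2 * A = 3 * A := by rw [hr3]; try ring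
      nlinarith [k1, hr3pos]
    have k3 : 3 * A ^ 2 < s ^ 2 := by
      have hAr : r3 ^ 2 * A ^ 2 = 3 * A ^ 2 := by rw [hr3]; try ring
      nlinarith [mul_pos (sub_pos.mpr k2) (by positivity : (0:ℝ) < s + r3 * A)]
    constructor
    · nlinarith [k3, hA2]
    · -- from h2 : 1 ≤ s^2 + (A*(2+r3) - t)^2
      have k4 : (2 + r3) * t ≤ A * (3 + 2 * r3) := by
        have hAr : A ^ 2 * r3 ^ 2 = 3 * A ^ 2 := by rw [hr3]; try ring
        nlinarith [h2, hA2, hA, mul_pos hA hA]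
      have k5 : t ≤ r3 * A := by
        have hAr : r3 ^ 2 * A = 3 * A := by rw [hr3]; try ring
        nlinarith [k4, hr3pos]
      have k6 : t ^ 2 ≤ 3 * A ^ 2 := by
        have hAr : r3 ^ 2 * A ^ 2 = 3 * A ^ 2 := by rw [hr3]; try ring
        nlinarith [mul_nonneg (sub_nonneg.mpr k5) (by positivity : (0:ℝ) ≤ r3 * A + t)]
      nlinarith [k6, hA2]
  · rintro ⟨hg1, hg2⟩
    have k3 : 3 * A ^ 2 < s ^ 2 := by nlinarith [hA2]
    have k2 : r3 * A < s := by
      have hAr : r3 ^ 2 * A ^ 2 = 3 * A ^ 2 := by rw [hr3]; try ring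
      nlinarith [mul_nonneg hr3pos.le hA.le, hs, k3]
    have k6 : t ^ 2 ≤ 3 * A ^ 2 := by nlinarith [hA2]
    have k5 : t ≤ r3 * A := by
      have hAr : r3 ^ 2 * A ^ 2 = 3 * A ^ 2 := by rw [hr3]; try ring
      nlinarith [mul_nonneg hr3pos.le hA.le, ht, k6]
    refine ⟨?_, ?_, ?_⟩
    · -- p2 condition from r2*A < s + t
      have kk : r2 * A < s + t := by
        have : r2 * A ≤ r3 * A := mul_le_mul_of_nonneg_right hr23 hA.le
        linarith
      have hAr : r2 ^ 2 * A ^ 2 = 2 * A ^ 2 := by rw [hr2]; try ring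
      nlinarith [mul_lt_mul_of_pos_left kk (by positivity : (0:ℝ) < A * (2 + r2)), hA2, hA]
    · -- y0 condition from t ≤ r3*A
      have hAr : A ^ 2 * r3 ^ 2 = 3 * A ^ 2 := by rw [hr3]; try ring
      have k4 : (2 + r3) * t ≤ A * (3 + 2 * r3) := by
        have hAr2 : r3 ^ 2 * A = 3 * A := by rw [hr3]; try ring
        nlinarith [k5, hr3pos]
      nlinarith [mul_le_mul_of_nonneg_left k4 hA.le, hA2]
    · -- x0 condition from r3*A < s
      have hAr : A ^ 2 * r3 ^ 2 = 3 * A ^ 2 := by rw [hr3]; try ring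
      have k1 : A * (3 + 2 * r3) < (2 + r3) * s := by
        have hAr2 : r3 ^ 2 * A = 3 * A := by rw [hr3]; try ring
        nlinarith [k2, hr3pos]
      nlinarith [mul_lt_mul_of_pos_left k1 hA, hA2]
end

section
/- Let s, t be real numbers with s > 0, t > 0 and s² + t² < 1, and set A = √(1 − s² − t²). Then the following are equivalent: (i) all three points p₂ = (1 + 1/√2) + i(1 + 1/√2), x₀ = 2 + √3 and y₀ = i(2 + √3) lie strictly inside Γ_{st}; (ii) 4s² + 3t² > 3 and 3s² + 4t² > 3. -/
lemma inside_iff (A s t x y : ℝ) (hA : 0 < A) :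
    norm ((((x:ℝ):ℂ) + ((y:ℝ):ℂ) * Complex.I) -
        ((s : ℂ) + (t : ℂ) * Complex.I) / ((A : ℝ) : ℂ)) < 1 / A ↔
    (A * x - s) ^ 2 + (A * y - t) ^ 2 < 1 := by
  have hA0 : (A : ℂ) ≠ 0 := by exact_mod_cast hA.ne'
  have hz : (((x:ℝ):ℂ) + ((y:ℝ):ℂ) * Complex.I) -
      ((s : ℂ) + (t : ℂ) * Complex.I) / ((A : ℝ) : ℂ) =
      ((x - s / A : ℝ) : ℂ) + ((y - t / A : ℝ) : ℂ) * Complex.I := by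
    push_cast
    field_simp
    ring
  rw [hz, Complex.norm_add_mul_I, Real.sqrt_lt' (by positivity)]
  have key : (x - s / A) ^ 2 + (y - t / A) ^ 2 =
      ((A * x - s) ^ 2 + (A * y - t) ^ 2) / A ^ 2 := by
    field_simp
  rw [key, div_pow, one_pow, div_lt_div_iff₀ (by positivity) (by positivity), one_mul]
  constructor <;> intro h <;> nlinarith [sq_nonneg A, mul_pos hA hA]

set_option maxHeartbeats 2000000 in
/-- For `s, t > 0` with `s² + t² < 1` and `A = √(1 − s² − t²)`: all three points
`p₂ = (1 + 1/√2) + i(1 + 1/√2)`, `x₀ = 2 + √3` and `y₀ = i(2 + √3)` lie strictly inside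
the circle `Γ_{st}` (center `(s + it)/A`, radius `1/A`) iff `4s² + 3t² > 3` and
`3s² + 4t² > 3`. -/
theorem C4_characterization (s t : ℝ) (hs : 0 < s) (ht : 0 < t)
    (hst : s ^ 2 + t ^ 2 < 1) :
    (norm ((((1 + 1 / Real.sqrt 2 : ℝ) : ℂ) + ((1 + 1 / Real.sqrt 2 : ℝ) : ℂ) * Complex.I) -
          ((s : ℂ) + (t : ℂ) * Complex.I) / ((Real.sqrt (1 - s ^ 2 - t ^ 2) : ℝ) : ℂ)) <
        1 / Real.sqrt (1 - s ^ 2 - t ^ 2) ∧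
      norm (((2 + Real.sqrt 3 : ℝ) : ℂ) -
          ((s : ℂ) + (t : ℂ) * Complex.I) / ((Real.sqrt (1 - s ^ 2 - t ^ 2) : ℝ) : ℂ)) <
        1 / Real.sqrt (1 - s ^ 2 - t ^ 2) ∧
      norm (((2 + Real.sqrt 3 : ℝ) : ℂ) * Complex.I -
          ((s : ℂ) + (t : ℂ) * Complex.I) / ((Real.sqrt (1 - s ^ 2 - t ^ 2) : ℝ) : ℂ)) <
        1 / Real.sqrt (1 - s ^ 2 - t ^ 2)) ↔
    (4 * s ^ 2 + 3 * t ^ 2 > 3 ∧ 3 * s ^ 2 + 4 * t ^ 2 > 3) := by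
  set A := Real.sqrt (1 - s ^ 2 - t ^ 2) with hAdef
  have h1st : 0 < 1 - s ^ 2 - t ^ 2 := by linarith
  have hA : 0 < A := Real.sqrt_pos.2 h1st
  have hA2 : A ^ 2 = 1 - s ^ 2 - t ^ 2 := Real.sq_sqrt h1st.le
  set r2 := Real.sqrt 2 with hr2def
  set r3 := Real.sqrt 3 with hr3def
  have hr2 : r2 ^ 2 = 2 := Real.sq_sqrt (by norm_num)
  have hr3 : r3 ^ 2 = 3 := Real.sq_sqrt (by norm_num)
  have hr2p : 0 < r2 := Real.sqrt_pos.2 (by norm_num)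
  have hr3p : 0 < r3 := Real.sqrt_pos.2 (by norm_num)
  set c : ℝ := 1 + 1 / r2 with hcdef
  have hcp : 0 < c := by positivity
  have hc : c = 1 + r2 / 2 := by
    have h12 : (1:ℝ) / r2 = r2 / 2 := by
      rw [div_eq_div_iff hr2p.ne' two_ne_zero]; nlinarith
    rw [hcdef, h12]
  have e2 : (((2 + r3 : ℝ) : ℂ) -
      ((s : ℂ) + (t : ℂ) * Complex.I) / ((A : ℝ) : ℂ)) =
      ((((2 + r3 : ℝ)):ℂ) + (((0:ℝ)):ℂ) * Complex.I) -
      ((s : ℂ) + (t : ℂ) * Complex.I) / ((A : ℝ) : ℂ) := by push_cast; ring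
  have e3 : (((2 + r3 : ℝ) : ℂ) * Complex.I -
      ((s : ℂ) + (t : ℂ) * Complex.I) / ((A : ℝ) : ℂ)) =
      ((((0:ℝ)):ℂ) + (((2 + r3 : ℝ)):ℂ) * Complex.I) -
      ((s : ℂ) + (t : ℂ) * Complex.I) / ((A : ℝ) : ℂ) := by push_cast; ring
  rw [e2, e3, inside_iff A s t c c hA, inside_iff A s t (2 + r3) 0 hA,
    inside_iff A s t 0 (2 + r3) hA]
  constructor
  · rintro ⟨-, h2, h3⟩
    constructor
    · have key : r3 * A < s := by nlinarith [mul_pos hA (by positivity : (0:ℝ) < 2 + r3)]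
      nlinarith [mul_pos (sub_pos.2 key) (add_pos (mul_pos hr3p hA) hs)]
    · have key : r3 * A < t := by nlinarith [mul_pos hA (by positivity : (0:ℝ) < 2 + r3)]
      nlinarith [mul_pos (sub_pos.2 key) (add_pos (mul_pos hr3p hA) ht)]
  · rintro ⟨h2, h3⟩
    have k2 : r3 * A < s := by
      nlinarith [add_pos (mul_pos hr3p hA) hs, mul_pos hr3p hA]
    have k3 : r3 * A < t := by
      nlinarith [add_pos (mul_pos hr3p hA) ht, mul_pos hr3p hA]
    refine ⟨?_, ?_, ?_⟩
    · have k1 : r2 * A < s + t := by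
        nlinarith [mul_pos hr2p hA, mul_pos hs ht]
      rw [hc]
      nlinarith [mul_pos (mul_pos hA (by positivity : (0:ℝ) < 2 + r2)) (sub_pos.2 k1)]
    · nlinarith [mul_pos (mul_pos hA (by positivity : (0:ℝ) < 2 + r3)) (sub_pos.2 k2)]
    · nlinarith [mul_pos (mul_pos hA (by positivity : (0:ℝ) < 2 + r3)) (sub_pos.2 k3)]
end

section
/- Let s, t be real numbers with s > 0, t > 0 and s² + t² < 1, and set A = √(1 − s² − t²). If (x, y) ∈ ℝ² satisfies (x − 2)² + y² = 3 and (x − s/A)² + (y − t/A)² = 1/A², then (x − 2)(x − s/A) + y(y − t/A) = 2s/A. In particular this scalar product is strictly positive, so the circles Γ_{st} and Γ₁ do not intersect orthogonally. -/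
/-- If `(x, y)` lies on both the circle `Γ₁` (center `(2,0)`, radius `√3`) and the circle
`Γ_{st}` (center `(s/A, t/A)`, radius `1/A`, where `A = √(1 − s² − t²)`), then the scalar
product of the radius vectors equals `2s/A`; in particular it is strictly positive, so
`Γ_{st}` and `Γ₁` do not intersect orthogonally. -/
theorem Gamma_st_Gamma1_not_orthogonal (s t : ℝ) (hs : 0 < s) (ht : 0 < t)
    (hst : s ^ 2 + t ^ 2 < 1) (x y : ℝ)
    (hΓ1 : (x - 2) ^ 2 + y ^ 2 = 3)
    (hΓst : (x - s / Real.sqrt (1 - s ^ 2 - t ^ 2)) ^ 2 +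
        (y - t / Real.sqrt (1 - s ^ 2 - t ^ 2)) ^ 2 = 1 / Real.sqrt (1 - s ^ 2 - t ^ 2) ^ 2) :
    (x - 2) * (x - s / Real.sqrt (1 - s ^ 2 - t ^ 2)) +
        y * (y - t / Real.sqrt (1 - s ^ 2 - t ^ 2)) = 2 * s / Real.sqrt (1 - s ^ 2 - t ^ 2) ∧
      0 < (x - 2) * (x - s / Real.sqrt (1 - s ^ 2 - t ^ 2)) +
        y * (y - t / Real.sqrt (1 - s ^ 2 - t ^ 2)) := by
  have h1 : (0:ℝ) < 1 - s ^ 2 - t ^ 2 := by linarith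
  set A := Real.sqrt (1 - s ^ 2 - t ^ 2) with hAdef
  have hA0 : 0 < A := Real.sqrt_pos.mpr h1
  have hA2 : A ^ 2 = 1 - s ^ 2 - t ^ 2 := Real.sq_sqrt h1.le
  have hAne : A ≠ 0 := ne_of_gt hA0
  have key : (x - 2) * (x - s / A) + y * (y - t / A) = 2 * s / A := by
    field_simp at hΓst ⊢
    nlinarith [hΓst, hΓ1, hA2, sq_nonneg A]
  refine ⟨key, ?_⟩
  rw [key]
  positivity
end

section
/- Let s, t be real numbers with s > 0, t > 0 and s² + t² < 1, and set A = √(1 − s² − t²). If (x, y) ∈ ℝ² satisfies x² + (y − 2)² = 3 and (x − s/A)² + (y − t/A)² = 1/A², then x(x − s/A) + (y − 2)(y − t/A) = 2t/A. In particular this scalar product is strictly positive, so the circles Γ_{st} and Γ₂ do not intersect orthogonally. -/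
/-- If `(x, y)` lies on both the circle `Γ₂` (center `(0,2)`, radius `√3`) and the circle
`Γ_{st}` (center `(s/A, t/A)`, radius `1/A`, where `A = √(1 − s² − t²)`), then the scalar
product of the radius vectors equals `2t/A`; in particular it is strictly positive, so
`Γ_{st}` and `Γ₂` do not intersect orthogonally. -/
theorem Gamma_st_Gamma2_not_orthogonal (s t : ℝ) (hs : 0 < s) (ht : 0 < t)
    (hst : s ^ 2 + t ^ 2 < 1) (x y : ℝ)
    (hΓ2 : x ^ 2 + (y - 2) ^ 2 = 3)
    (hΓst : (x - s / Real.sqrt (1 - s ^ 2 - t ^ 2)) ^ 2 +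
        (y - t / Real.sqrt (1 - s ^ 2 - t ^ 2)) ^ 2 = 1 / Real.sqrt (1 - s ^ 2 - t ^ 2) ^ 2) :
    x * (x - s / Real.sqrt (1 - s ^ 2 - t ^ 2)) +
        (y - 2) * (y - t / Real.sqrt (1 - s ^ 2 - t ^ 2)) =
        2 * t / Real.sqrt (1 - s ^ 2 - t ^ 2) ∧
      0 < x * (x - s / Real.sqrt (1 - s ^ 2 - t ^ 2)) +
        (y - 2) * (y - t / Real.sqrt (1 - s ^ 2 - t ^ 2)) := by
  set A := Real.sqrt (1 - s ^ 2 - t ^ 2) with hA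
  have hApos : 0 < A := Real.sqrt_pos.mpr (by nlinarith)
  have hA2 : A ^ 2 = 1 - s ^ 2 - t ^ 2 := Real.sq_sqrt (by nlinarith)
  have hAne : A ≠ 0 := ne_of_gt hApos
  have key : x * (x - s / A) + (y - 2) * (y - t / A) = 2 * t / A := by
    field_simp at hΓst ⊢
    nlinarith [hΓst, hΓ2, hA2, sq_nonneg A]
  refine ⟨key, key ▸ by positivity⟩
end

section
/- Let s, t be real numbers with s > 0, t > 0 and s² + t² < 1, and set A = √(1 − s² − t²). If p = (x, y) ∈ ℝ² is a common point of the circles Γ₁ and Γ_{st}, then the cosine of the angle between the radius vectors p − (2, 0) and p − (s/A, t/A) equals 2s/√3; likewise, if p is a common point of Γ₂ and Γ_{st}, the cosine of the angle between p − (0, 2) and p − (s/A, t/A) equals 2t/√3. In particular, at every such intersection point the angle between the radius vectors is acute, and for s = t = 1/2 its cosine equals 1/√3. -/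
/-- For `s, t > 0` with `s² + t² < 1` and `A = √(1 − s² − t²)`: at every common point of
`Γ₁` (center `(2,0)`, radius `√3`) and `Γ_{st}` (center `(s/A, t/A)`, radius `1/A`), the
cosine of the angle between the radius vectors equals `2s/√3`; at every common point of
`Γ₂` (center `(0,2)`, radius `√3`) and `Γ_{st}`, that cosine equals `2t/√3`. In particular
these cosines are strictly positive (the angles are acute), and for `s = t = 1/2` the
cosine equals `1/√3`. -/
theorem Gamma_st_intersection_angle_cosine (s t : ℝ) (hs : 0 < s) (ht : 0 < t)
    (hst : s ^ 2 + t ^ 2 < 1) :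
    (∀ x y : ℝ, (x - 2) ^ 2 + y ^ 2 = 3 →
      (x - s / Real.sqrt (1 - s ^ 2 - t ^ 2)) ^ 2 +
        (y - t / Real.sqrt (1 - s ^ 2 - t ^ 2)) ^ 2 = 1 / Real.sqrt (1 - s ^ 2 - t ^ 2) ^ 2 →
      ((x - 2) * (x - s / Real.sqrt (1 - s ^ 2 - t ^ 2)) +
          y * (y - t / Real.sqrt (1 - s ^ 2 - t ^ 2))) /
        (Real.sqrt ((x - 2) ^ 2 + y ^ 2) *
          Real.sqrt ((x - s / Real.sqrt (1 - s ^ 2 - t ^ 2)) ^ 2 +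
            (y - t / Real.sqrt (1 - s ^ 2 - t ^ 2)) ^ 2)) = 2 * s / Real.sqrt 3) ∧
    (∀ x y : ℝ, x ^ 2 + (y - 2) ^ 2 = 3 →
      (x - s / Real.sqrt (1 - s ^ 2 - t ^ 2)) ^ 2 +
        (y - t / Real.sqrt (1 - s ^ 2 - t ^ 2)) ^ 2 = 1 / Real.sqrt (1 - s ^ 2 - t ^ 2) ^ 2 →
      (x * (x - s / Real.sqrt (1 - s ^ 2 - t ^ 2)) +
          (y - 2) * (y - t / Real.sqrt (1 - s ^ 2 - t ^ 2))) /
        (Real.sqrt (x ^ 2 + (y - 2) ^ 2) *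
          Real.sqrt ((x - s / Real.sqrt (1 - s ^ 2 - t ^ 2)) ^ 2 +
            (y - t / Real.sqrt (1 - s ^ 2 - t ^ 2)) ^ 2)) = 2 * t / Real.sqrt 3) ∧
    0 < 2 * s / Real.sqrt 3 ∧ 0 < 2 * t / Real.sqrt 3 ∧
    (s = 1 / 2 → t = 1 / 2 → 2 * s / Real.sqrt 3 = 1 / Real.sqrt 3) := by

  have h1 : (0:ℝ) < 1 - s ^ 2 - t ^ 2 := by linarith
  set A := Real.sqrt (1 - s ^ 2 - t ^ 2) with hAdef
  have hA : 0 < A := Real.sqrt_pos.mpr h1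
  have hA2 : A ^ 2 = 1 - s ^ 2 - t ^ 2 := Real.sq_sqrt h1.le
  have hAne : A ≠ 0 := ne_of_gt hA
  have hs3 : Real.sqrt 3 ≠ 0 := by positivity
  have hsqinv : Real.sqrt (1 / A ^ 2) = 1 / A := by
    rw [one_div, Real.sqrt_inv, Real.sqrt_sq hA.le, one_div]
  refine ⟨?_, ?_, by positivity, by positivity, ?_⟩
  · intro x y hc1 hc2
    have hnum : (x - 2) * (x - s / A) + y * (y - t / A) = 2 * s / A := by
      have := hA2
      field_simp at hc2 ⊢
      nlinarith [hc1, hc2, sq_nonneg A]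
    rw [hc1, hc2, hsqinv, hnum]
    rw [div_eq_div_iff (by positivity) (by positivity)]
    field_simp
    try ring
  · intro x y hc1 hc2
    have hnum : x * (x - s / A) + (y - 2) * (y - t / A) = 2 * t / A := by
      have := hA2
      field_simp at hc2 ⊢
      nlinarith [hc1, hc2, sq_nonneg A]
    rw [hc1, hc2, hsqinv, hnum]
    rw [div_eq_div_iff (by positivity) (by positivity)]
    field_simp
    try ring
  · intro h1 h2
    rw [h1]; ring
end

section
/- Let s, t be real numbers with s > 0, t > 0, s² + t² < 1 and 3s² + 3t² + 2st = 2. Set A = √(1 − s² − t²), a = A/2 − t/√2, and P = (0, 0, a), and let V₁ = (0, −t, A/2), V₂ = (0, t, A/2), V₃ = (s, 0, −A/2), V₄ = (−s, 0, −A/2) be the vertices of the tetrahedron T_{st}. Then −A/2 < a < A/2, and for every pair of distinct indices i ≠ j the cosine of the angle between V_i − P and V_j − P equals −1/3; that is, all six angles between the segments from P to the four vertices of T_{st} equal arccos(−1/3). -/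
set_option maxHeartbeats 4000000

open InnerProductGeometry in
lemma aux_angle3 (x y z x' y' z' p q : ℝ) (hp : 0 < p) (hq : 0 < q)
    (hu : x^2+y^2+z^2 = 3/2*p^2) (hv : x'^2+y'^2+z'^2 = 3/2*q^2)
    (huv : x*x'+y*y'+z*z' = -(p*q/2)) :
    angle ((WithLp.equiv 2 (Fin 3 → ℝ)).symm ![x,y,z])
      ((WithLp.equiv 2 (Fin 3 → ℝ)).symm ![x',y',z']) = Real.arccos (-(1/3)) := by
  have hinner : (inner ℝ ((WithLp.equiv 2 (Fin 3 → ℝ)).symm ![x,y,z])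
      ((WithLp.equiv 2 (Fin 3 → ℝ)).symm ![x',y',z']) : ℝ) = x*x'+y*y'+z*z' := by
    simp [PiLp.inner_apply, Fin.sum_univ_three, RCLike.inner_apply, WithLp.equiv_symm_apply, PiLp.toLp_apply]
    ring
  have hnu : ‖((WithLp.equiv 2 (Fin 3 → ℝ)).symm ![x,y,z])‖ = Real.sqrt (3/2*p^2) := by
    simp [EuclideanSpace.norm_eq, Fin.sum_univ_three, sq_abs, hu]
  have hnv : ‖((WithLp.equiv 2 (Fin 3 → ℝ)).symm ![x',y',z'])‖ = Real.sqrt (3/2*q^2) := by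
    simp [EuclideanSpace.norm_eq, Fin.sum_univ_three, sq_abs, hv]
  have hprod : Real.sqrt (3/2*p^2) * Real.sqrt (3/2*q^2) = 3/2*(p*q) := by
    rw [← Real.sqrt_mul (by positivity), show (3/2*p^2)*(3/2*q^2) = (3/2*(p*q))^2 by ring,
      Real.sqrt_sq (by positivity)]
  rw [angle, hinner, hnu, hnv, hprod, huv]
  congr 1
  field_simp

/-- For `s, t > 0` with `s² + t² < 1` and `3s² + 3t² + 2st = 2`, setting
`A = √(1 − s² − t²)`, `a = A/2 − t/√2` and `P = (0,0,a)`: the point `P` lies strictly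
between the horizontal planes of the tetrahedron `T_{st}` (i.e. `−A/2 < a < A/2`), and for
every pair of distinct vertices `Vᵢ ≠ Vⱼ` of `T_{st}`, the cosine of the angle between
`Vᵢ − P` and `Vⱼ − P` equals `−1/3`, i.e. all six angles at `P` equal `arccos(−1/3)`. -/
theorem flat_cone_T_singularity (s t : ℝ) (hs : 0 < s) (ht : 0 < t)
    (hst : s ^ 2 + t ^ 2 < 1) (hF : 3 * s ^ 2 + 3 * t ^ 2 + 2 * s * t = 2) :
    let A := Real.sqrt (1 - s ^ 2 - t ^ 2)
    let a := A / 2 - t / Real.sqrt 2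
    let P : EuclideanSpace ℝ (Fin 3) := (WithLp.equiv 2 (Fin 3 → ℝ)).symm ![0, 0, a]
    let V : Fin 4 → EuclideanSpace ℝ (Fin 3) :=
      ![(WithLp.equiv 2 (Fin 3 → ℝ)).symm ![0, -t, A / 2],
        (WithLp.equiv 2 (Fin 3 → ℝ)).symm ![0, t, A / 2],
        (WithLp.equiv 2 (Fin 3 → ℝ)).symm ![s, 0, -(A / 2)],
        (WithLp.equiv 2 (Fin 3 → ℝ)).symm ![-s, 0, -(A / 2)]]
    (-(A / 2) < a ∧ a < A / 2 ∧
      ∀ i j : Fin 4, i ≠ j →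
        (Real.cos (InnerProductGeometry.angle (V i - P) (V j - P)) = -(1 / 3) ∧
          InnerProductGeometry.angle (V i - P) (V j - P) = Real.arccos (-(1 / 3)))) := by
  intro A a P V
  have h2 : (0:ℝ) < Real.sqrt 2 := by positivity
  have h2' : Real.sqrt 2 ^ 2 = 2 := Real.sq_sqrt (by norm_num)
  have hA : A = (s+t)/Real.sqrt 2 := by
    have h : 1 - s^2 - t^2 = ((s+t)/Real.sqrt 2)^2 := by
      rw [div_pow, h2']; nlinarith [hF]
    show Real.sqrt (1 - s^2 - t^2) = _
    rw [h, Real.sqrt_sq (by positivity)]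
  have ha : a = A/2 - t/Real.sqrt 2 := rfl
  have hsum : a + A/2 = s/Real.sqrt 2 := by
    rw [ha, hA]; field_simp; nlinarith [h2']
  have hdiff : A/2 - a = t/Real.sqrt 2 := by rw [ha]; ring
  refine ⟨by nlinarith [div_pos hs h2], by nlinarith [div_pos ht h2], ?_⟩
  have hz3 : -(A/2) - a = -(s/Real.sqrt 2) := by nlinarith [hsum]
  have hz1 : A/2 - a = t/Real.sqrt 2 := hdiff
  -- squares of 1/√2 terms
  have hts : (t/Real.sqrt 2)^2 = t^2/2 := by rw [div_pow, h2']
  have hss : (s/Real.sqrt 2)^2 = s^2/2 := by rw [div_pow, h2']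
  have hst2 : (t/Real.sqrt 2) * (s/Real.sqrt 2) = s*t/2 := by
    rw [div_mul_div_comm, Real.mul_self_sqrt (by norm_num : (0:ℝ) ≤ 2)]
    ring
  -- explicit difference vectors
  have e0 : V 0 - P = (WithLp.equiv 2 (Fin 3 → ℝ)).symm ![0, -t, t/Real.sqrt 2] := by
    refine PiLp.ext fun i => ?_
    fin_cases i <;>
      simp [V, P, PiLp.sub_apply, WithLp.equiv_symm_apply, PiLp.toLp_apply] <;> linarith [hz1]
  have e1 : V 1 - P = (WithLp.equiv 2 (Fin 3 → ℝ)).symm ![0, t, t/Real.sqrt 2] := by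
    refine PiLp.ext fun i => ?_
    fin_cases i <;>
      simp [V, P, PiLp.sub_apply, WithLp.equiv_symm_apply, PiLp.toLp_apply] <;> linarith [hz1]
  have e2 : V 2 - P = (WithLp.equiv 2 (Fin 3 → ℝ)).symm ![s, 0, -(s/Real.sqrt 2)] := by
    refine PiLp.ext fun i => ?_
    fin_cases i <;>
      simp [V, P, PiLp.sub_apply, WithLp.equiv_symm_apply, PiLp.toLp_apply] <;> linarith [hz3]
  have e3 : V 3 - P = (WithLp.equiv 2 (Fin 3 → ℝ)).symm ![-s, 0, -(s/Real.sqrt 2)] := by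
    refine PiLp.ext fun i => ?_
    fin_cases i <;>
      simp [V, P, PiLp.sub_apply, WithLp.equiv_symm_apply, PiLp.toLp_apply] <;> linarith [hz3]
  clear_value A a P V
  have h01 : InnerProductGeometry.angle (V 0 - P) (V 1 - P) = Real.arccos (-(1/3)) := by
    rw [e0, e1]; exact aux_angle3 _ _ _ _ _ _ t t ht ht (by linear_combination hts) (by linear_combination hts)
      (by linear_combination hts)
  have h02 : InnerProductGeometry.angle (V 0 - P) (V 2 - P) = Real.arccos (-(1/3)) := by
    rw [e0, e2]; exact aux_angle3 _ _ _ _ _ _ t s ht hs (by linear_combination hts) (by linear_combination hss)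
      (by linear_combination -hst2)
  have h03 : InnerProductGeometry.angle (V 0 - P) (V 3 - P) = Real.arccos (-(1/3)) := by
    rw [e0, e3]; exact aux_angle3 _ _ _ _ _ _ t s ht hs (by linear_combination hts) (by linear_combination hss)
      (by linear_combination -hst2)
  have h12 : InnerProductGeometry.angle (V 1 - P) (V 2 - P) = Real.arccos (-(1/3)) := by
    rw [e1, e2]; exact aux_angle3 _ _ _ _ _ _ t s ht hs (by linear_combination hts) (by linear_combination hss)
      (by linear_combination -hst2)
  have h13 : InnerProductGeometry.angle (V 1 - P) (V 3 - P) = Real.arccos (-(1/3)) := by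
    rw [e1, e3]; exact aux_angle3 _ _ _ _ _ _ t s ht hs (by linear_combination hts) (by linear_combination hss)
      (by linear_combination -hst2)
  have h23 : InnerProductGeometry.angle (V 2 - P) (V 3 - P) = Real.arccos (-(1/3)) := by
    rw [e2, e3]; exact aux_angle3 _ _ _ _ _ _ s s hs hs (by linear_combination hss) (by linear_combination hss)
      (by linear_combination hss)
  have h10 := (InnerProductGeometry.angle_comm (V 1 - P) (V 0 - P)).trans h01
  have h20 := (InnerProductGeometry.angle_comm (V 2 - P) (V 0 - P)).trans h02
  have h30 := (InnerProductGeometry.angle_comm (V 3 - P) (V 0 - P)).trans h03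
  have h21 := (InnerProductGeometry.angle_comm (V 2 - P) (V 1 - P)).trans h12
  have h31 := (InnerProductGeometry.angle_comm (V 3 - P) (V 1 - P)).trans h13
  have h32 := (InnerProductGeometry.angle_comm (V 3 - P) (V 2 - P)).trans h23
  intro i j hij
  have main : InnerProductGeometry.angle (V i - P) (V j - P) = Real.arccos (-(1/3)) := by
    fin_cases i <;> fin_cases j
    exacts [absurd rfl hij, h01, h02, h03, h10, absurd rfl hij, h12, h13,
      h20, h21, absurd rfl hij, h23, h30, h31, h32, absurd rfl hij]
  refine ⟨?_, main⟩
  rw [main, Real.cos_arccos (by norm_num) (by norm_num)]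
end
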